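/- Let p ∈ [1,∞) and let g ∈ ℓ^p(ℕ)^+ be a strictly decreasing sequence with g(i) > 0 for all i ∈ ℕ. Let f ∈ ℓ^p(ℕ)^+ be defined by f(1) = 0 and f(i+1) = g(i) for all i ∈ ℕ (i.e., f = Rg where R is the right shift). Then f ≺_w g, but there is no increasable doubly substochastic operator D on ℓ^p(ℕ) with f = Dg; that is, f is not submajorized by g. -/

import Mathlib

open scoped ENNReal BigOperators

noncomputable section

/-- ℓᵖ(I) with real scalars. -/
abbrev Lp (I : Type*) (p : ℝ≥0∞) := lp (fun _ : I => ℝ) p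

/-- The standard basis vector `e_j` of `ℓᵖ(I)`. -/
def stdVec {I : Type*} (p : ℝ≥0∞) (j : I) : Lp I p :=
  haveI := Classical.decEq I
  lp.single p j 1

/-- A bounded operator on ℓᵖ(I) is positive if it maps the positive cone into itself. -/
def IsPos {I : Type*} {p : ℝ≥0∞} [Fact (1 ≤ p)] (A : Lp I p →L[ℝ] Lp I p) : Prop :=
  ∀ f : Lp I p, (∀ i, 0 ≤ f i) → ∀ i, 0 ≤ A f i

/-- Doubly stochastic operator on ℓᵖ(I). -/
def DoublyStochastic {I : Type*} {p : ℝ≥0∞} [Fact (1 ≤ p)]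
    (A : Lp I p →L[ℝ] Lp I p) : Prop :=
  IsPos A ∧ (∀ i : I, HasSum (fun j : I => A (stdVec p j) i) 1)
          ∧ (∀ j : I, HasSum (fun i : I => A (stdVec p j) i) 1)

/-- Doubly substochastic operator on ℓᵖ(I) (finite partial sums formulation). -/
def DoublySubstochastic {I : Type*} {p : ℝ≥0∞} [Fact (1 ≤ p)]
    (A : Lp I p →L[ℝ] Lp I p) : Prop :=
  IsPos A ∧ (∀ i : I, ∀ s : Finset I, ∑ j ∈ s, A (stdVec p j) i ≤ 1)
          ∧ (∀ j : I, ∀ s : Finset I, ∑ i ∈ s, A (stdVec p j) i ≤ 1)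

/-- Increasable doubly substochastic operator on ℓᵖ(I). -/
def IncreasableDsS {I : Type*} {p : ℝ≥0∞} [Fact (1 ≤ p)]
    (A : Lp I p →L[ℝ] Lp I p) : Prop :=
  IsPos A ∧ ∃ A₁ : Lp I p →L[ℝ] Lp I p, DoublyStochastic A₁ ∧
    ∀ i j : I, A (stdVec p j) i ≤ A₁ (stdVec p j) i

/-- Majorization: `f ≺ g`. -/
def Maj {I : Type*} {p : ℝ≥0∞} [Fact (1 ≤ p)] (f g : Lp I p) : Prop :=
  ∃ D : Lp I p →L[ℝ] Lp I p, DoublyStochastic D ∧ f = D g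

/-- Weak majorization: `f ≺_w g`. -/
def MajW {I : Type*} {p : ℝ≥0∞} [Fact (1 ≤ p)] (f g : Lp I p) : Prop :=
  ∃ D : Lp I p →L[ℝ] Lp I p, DoublySubstochastic D ∧ f = D g

/-- Submajorization: `f ≺_s g`. -/
def MajS {I : Type*} {p : ℝ≥0∞} [Fact (1 ≤ p)] (f g : Lp I p) : Prop :=
  ∃ D : Lp I p →L[ℝ] Lp I p, IncreasableDsS D ∧ f = D g

/-- Permutation operator on ℓᵖ(I). -/
def IsPermutationOp {I : Type*} {p : ℝ≥0∞} [Fact (1 ≤ p)]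
    (P : Lp I p →L[ℝ] Lp I p) : Prop :=
  ∃ θ : I ≃ I, ∀ j : I, P (stdVec p j) = stdVec p (θ j)

/-- `P` is the operator `P_θ` associated with the injection `θ : I → I`,
i.e. `P f = ∑_{k ∈ I} f(k) e_{θ(k)}`. -/
def IsPTheta {I : Type*} {p : ℝ≥0∞} [Fact (1 ≤ p)] (θ : I → I)
    (P : Lp I p →L[ℝ] Lp I p) : Prop :=
  (∀ f : Lp I p, ∀ k : I, P f (θ k) = f k) ∧
  (∀ f : Lp I p, ∀ i : I, i ∉ Set.range θ → P f i = 0)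

/-- `T` preserves weak majorization on the positive cone. -/
def PreservesMajW {I : Type*} {p : ℝ≥0∞} [Fact (1 ≤ p)]
    (T : Lp I p →L[ℝ] Lp I p) : Prop :=
  ∀ f g : Lp I p, (∀ i, 0 ≤ f i) → (∀ i, 0 ≤ g i) → MajW f g → MajW (T f) (T g)

/-- `T` preserves submajorization on the positive cone. -/
def PreservesMajS {I : Type*} {p : ℝ≥0∞} [Fact (1 ≤ p)]
    (T : Lp I p →L[ℝ] Lp I p) : Prop :=
  ∀ f g : Lp I p, (∀ i, 0 ≤ f i) → (∀ i, 0 ≤ g i) → MajS f g → MajS (T f) (T g)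

end

/-!
The right shift `R` sends `e_j` to `e_{j+1}`, so it is doubly substochastic and `f = R g`.

Conversely let `f = D g` with `D ≤ A₁` entrywise, `A₁` doubly stochastic. Put
`c_j = ∑_{i=1}^{n+1} D_{ij}`: then `0 ≤ c_j ≤ 1`, `∑_j c_j ≤ n + 1` (row bounds) and
`∑_j g_j c_j = ∑_{i=1}^{n+1} f_i = ∑_{k=0}^{n} g_k`. Since `g` is strictly decreasing, the only way
to reach this value is `c_0 = ⋯ = c_n = 1`. So column `n` of `D` already carries mass `1` in the rows
`1, …, n + 1`; as `A₁ ≥ D` has column sums `1`, column `n` of `A₁` vanishes at row `0`. Row `0` of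
`A₁` is then identically zero, contradicting its row sum `1`.
-/

open Finset

section Basis

variable {I : Type*} {p : ℝ≥0∞}

theorem stdVec_apply [DecidableEq I] (j i : I) :
    (stdVec p j : Lp I p) i = if i = j then 1 else 0 := by
  simp [stdVec, Pi.single_apply]

theorem stdVec_nonneg (j i : I) : 0 ≤ (stdVec p j : Lp I p) i := by
  classical
  rw [stdVec_apply]
  split_ifs <;> norm_num

theorem lp_single_eq_smul_stdVec [DecidableEq I] (j : I) (a : ℝ) :
    (lp.single p j a : Lp I p) = a • stdVec p j := by
  ext i
  simp [stdVec_apply, Pi.single_apply]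

theorem hasSum_mul_apply_stdVec [Fact (1 ≤ p)] (hp : p ≠ ∞) (A : Lp I p →L[ℝ] Lp I p)
    (h : Lp I p) (i : I) : HasSum (fun j => h j * A (stdVec p j) i) (A h i) := by
  classical
  have := ((lp.evalCLM ℝ (fun _ : I => ℝ) p i).comp A).hasSum (lp.hasSum_single hp h)
  simpa [lp_single_eq_smul_stdVec, lp.evalCLM] using this

end Basis

section Operators

variable {I : Type*} {p : ℝ≥0∞} [Fact (1 ≤ p)] {A : Lp I p →L[ℝ] Lp I p}

theorem IsPos.apply_stdVec_nonneg (hA : IsPos A) (i j : I) : 0 ≤ A (stdVec p j) i :=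
  hA _ (stdVec_nonneg j) i

theorem isPos_of_apply_stdVec_nonneg (hp : p ≠ ∞) (hA : ∀ i j, 0 ≤ A (stdVec p j) i) :
    IsPos A := fun h hh i =>
  (hasSum_mul_apply_stdVec hp A h i).nonneg fun j => mul_nonneg (hh j) (hA i j)

theorem doublySubstochastic_of_apply_stdVec (hp : p ≠ ∞) {θ : I → I}
    (hθ : Function.Injective θ) (hA : ∀ j, A (stdVec p j) = stdVec p (θ j)) :
    DoublySubstochastic A := by
  classical
  simp only [DoublySubstochastic, hA, stdVec_apply]
  refine ⟨isPos_of_apply_stdVec_nonneg hp fun i j => ?_, fun i s => ?_, fun j s => ?_⟩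
  · rw [hA]; exact stdVec_nonneg _ _
  · rw [sum_ite, sum_const_zero, add_zero, sum_const, nsmul_one, Nat.cast_le_one]
    exact card_le_one.2 fun a ha b hb => hθ ((mem_filter.1 ha).2.symm.trans (mem_filter.1 hb).2)
  · rw [sum_ite_eq']
    split_ifs <;> norm_num

theorem IncreasableDsS.doublySubstochastic (hA : IncreasableDsS A) : DoublySubstochastic A := by
  obtain ⟨hpos, A₁, ⟨hpos₁, hrow, hcol⟩, hle⟩ := hA
  refine ⟨hpos, fun i s => ?_, fun j s => ?_⟩
  · exact (sum_le_sum fun j _ => hle i j).trans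
      (sum_le_hasSum s (fun j _ => hpos₁.apply_stdVec_nonneg i j) (hrow i))
  · exact (sum_le_sum fun i _ => hle i j).trans
      (sum_le_hasSum s (fun i _ => hpos₁.apply_stdVec_nonneg i j) (hcol j))

end Operators

theorem StrictAnti.eq_one_of_hasSum_mul_eq_sum_range {g c : ℕ → ℝ} (hg : StrictAnti g) {n : ℕ}
    (hgn : 0 ≤ g (n + 1)) (hc0 : ∀ j, 0 ≤ c j) (hc1 : ∀ j, c j ≤ 1)
    (hcs : ∀ s : Finset ℕ, ∑ j ∈ s, c j ≤ n + 1)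
    (hgc : HasSum (fun j => g j * c j) (∑ k ∈ range (n + 1), g k)) {j : ℕ} (hj : j ≤ n) :
    c j = 1 := by
  set G := g (n + 1)
  have hc : Summable c := summable_of_sum_le (fun j => hc0 j) hcs
  have htail_c := hc.sum_add_tsum_nat_add (n + 1)
  have htail_gc := hgc.summable.sum_add_tsum_nat_add (n + 1)
  rw [hgc.tsum_eq] at htail_gc
  have htail : ∑' k, g (k + (n + 1)) * c (k + (n + 1)) ≤ G * ∑' k, c (k + (n + 1)) := by
    rw [← tsum_mul_left]
    refine Summable.tsum_le_tsum (fun k => mul_le_mul_of_nonneg_right ?_ (hc0 _))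
      ((summable_nat_add_iff (n + 1)).2 hgc.summable)
      (((summable_nat_add_iff (n + 1)).2 hc).mul_left G)
    exact hg.antitone (by omega)
  have hmass : G * ∑' k, c (k + (n + 1)) ≤ G * (n + 1 - ∑ k ∈ range (n + 1), c k) :=
    mul_le_mul_of_nonneg_left (by linarith [hc.tsum_le_of_sum_le hcs]) hgn
  -- moving weight of `c` beyond index `n` can only lower `∑ g c`
  have hdefect : ∑ k ∈ range (n + 1), (g k - G) * (1 - c k) ≤ 0 := by
    have hexpand : ∑ k ∈ range (n + 1), (g k - G) * (1 - c k) = ∑ k ∈ range (n + 1), g k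
        - ∑ k ∈ range (n + 1), g k * c k - G * (n + 1 - ∑ k ∈ range (n + 1), c k) := by
      simp only [mul_sub, sub_mul, sum_sub_distrib, ← mul_sum, mul_one, sum_const, card_range]
      ring
    linarith
  have hnonneg : ∀ k ∈ range (n + 1), 0 ≤ (g k - G) * (1 - c k) := fun k hk =>
    mul_nonneg (sub_nonneg.2 (hg.antitone (by simp at hk; omega))) (sub_nonneg.2 (hc1 k))
  have hterm := (sum_eq_zero_iff_of_nonneg hnonneg).1
    (le_antisymm hdefect (sum_nonneg hnonneg)) j (mem_range.2 (by omega))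
  have hGj : G < g j := hg (by omega)
  rcases mul_eq_zero.1 hterm with h | h <;> linarith

section RightShift

variable {p : ℝ≥0∞} [Fact (1 ≤ p)]

def rightShiftSeq (h : ℕ → ℝ) : ℕ → ℝ
  | 0 => 0
  | n + 1 => h n

theorem toReal_pos_of_ne_top (hp : p ≠ ∞) : 0 < p.toReal :=
  ENNReal.toReal_pos (zero_lt_one.trans_le Fact.out).ne' hp

theorem Memℓp.rightShiftSeq (hp : p ≠ ∞) {h : ℕ → ℝ} (hh : Memℓp h p) :
    Memℓp (rightShiftSeq h) p :=
  memℓp_gen <| (summable_nat_add_iff 1).1 (hh.summable (toReal_pos_of_ne_top hp))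

def rightShiftₗ (hp : p ≠ ∞) : Lp ℕ p →ₗ[ℝ] Lp ℕ p where
  toFun h := ⟨rightShiftSeq h, (lp.memℓp h).rightShiftSeq hp⟩
  map_add' h₁ h₂ := by
    ext (_ | i)
    exacts [(add_zero 0).symm, rfl]
  map_smul' c h := by
    ext (_ | i)
    exacts [(smul_zero c).symm, rfl]

theorem norm_rightShiftₗ (hp : p ≠ ∞) (h : Lp ℕ p) : ‖rightShiftₗ hp h‖ = ‖h‖ := by
  have hr := toReal_pos_of_ne_top hp
  have key : ‖rightShiftₗ hp h‖ ^ p.toReal = ‖h‖ ^ p.toReal := by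
    rw [lp.norm_rpow_eq_tsum hr, lp.norm_rpow_eq_tsum hr,
      ((lp.memℓp (rightShiftₗ hp h)).summable hr).tsum_eq_zero_add]
    simp [rightShiftₗ, rightShiftSeq, Real.zero_rpow hr.ne']
  exact (Real.rpow_left_inj (norm_nonneg _) (norm_nonneg _) hr.ne').1 key

def rightShift (hp : p ≠ ∞) : Lp ℕ p →ₗᵢ[ℝ] Lp ℕ p :=
  ⟨rightShiftₗ hp, norm_rightShiftₗ hp⟩

theorem rightShift_apply_zero (hp : p ≠ ∞) (h : Lp ℕ p) : rightShift hp h 0 = 0 := rfl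

theorem rightShift_apply_succ (hp : p ≠ ∞) (h : Lp ℕ p) (i : ℕ) :
    rightShift hp h (i + 1) = h i := rfl

theorem rightShift_stdVec (hp : p ≠ ∞) (j : ℕ) :
    rightShift hp (stdVec p j) = stdVec p (j + 1) := by
  ext (_ | i) <;> simp [rightShift_apply_zero, rightShift_apply_succ, stdVec_apply]

theorem doublySubstochastic_rightShift (hp : p ≠ ∞) :
    DoublySubstochastic (rightShift hp).toContinuousLinearMap :=
  doublySubstochastic_of_apply_stdVec hp (add_left_injective 1) (rightShift_stdVec hp)

end RightShift

theorem HasSum.apply_eq_zero_of_sum_eq_of_le {ι : Type*} {x y : ι → ℝ} {a : ℝ}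
    (hy : HasSum y a) (hx : ∀ k, 0 ≤ x k) (hxy : ∀ k, x k ≤ y k) {t : Finset ι}
    (ht : ∑ k ∈ t, x k = a) {i : ι} (hi : i ∉ t) : y i = 0 := by
  classical
  have hy0 k : 0 ≤ y k := (hx k).trans (hxy k)
  have hle := sum_le_hasSum (insert i t) (fun k _ => hy0 k) hy
  rw [sum_insert hi] at hle
  linarith [sum_le_sum fun k (_ : k ∈ t) => hxy k, hy0 i]

theorem DoublySubstochastic.sum_apply_stdVec_succ_eq_one {p : ℝ≥0∞} [Fact (1 ≤ p)] (hp : p ≠ ∞)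
    {D : Lp ℕ p →L[ℝ] Lp ℕ p} (hD : DoublySubstochastic D) {g f : Lp ℕ p}
    (hg0 : ∀ i, 0 ≤ g i) (hg : StrictAnti g) (hf : ∀ i, f (i + 1) = g i) (hDg : f = D g)
    (n : ℕ) : ∑ i ∈ range (n + 1), D (stdVec p n) (i + 1) = 1 := by
  obtain ⟨hpos, hrow, hcol⟩ := hD
  set t := (range (n + 1)).map (addRightEmbedding 1)
  have hmass : ∀ s : Finset ℕ, ∑ j ∈ s, ∑ i ∈ t, D (stdVec p j) i ≤ n + 1 := fun s => by
    rw [sum_comm]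
    exact (sum_le_sum fun i _ => hrow i s).trans (by simp [t])
  have hgc : HasSum (fun j => g j * ∑ i ∈ t, D (stdVec p j) i) (∑ k ∈ range (n + 1), g k) := by
    simpa [mul_sum, t, ← hDg, hf] using
      hasSum_sum fun i (_ : i ∈ t) => hasSum_mul_apply_stdVec hp D g i
  simpa [t] using hg.eq_one_of_hasSum_mul_eq_sum_range (hg0 _)
    (fun j => sum_nonneg fun i _ => hpos.apply_stdVec_nonneg i j) (fun j => hcol j t) hmass hgc
    le_rfl

theorem stmt_9 (p : ℝ≥0∞) [Fact (1 ≤ p)] (hp : p ≠ ∞)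
    (g f : Lp ℕ p) (hgpos : ∀ i, 0 < g i) (hgdec : ∀ i j : ℕ, i < j → g j < g i)
    (hf0 : f 0 = 0) (hf : ∀ i : ℕ, f (i + 1) = g i) :
    MajW f g ∧ ¬ MajS f g := by
  refine ⟨⟨(rightShift hp).toContinuousLinearMap, doublySubstochastic_rightShift hp, ?_⟩, ?_⟩
  · ext (_ | i)
    exacts [hf0, hf i]
  rintro ⟨D, hD, hDg⟩
  have hcolD := hD.doublySubstochastic.sum_apply_stdVec_succ_eq_one hp (fun i => (hgpos i).le)
    hgdec hf hDg
  obtain ⟨hpos, A₁, ⟨-, hrow₁, hcol₁⟩, hle⟩ := hD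
  have hrow₁_zero : ∀ j, A₁ (stdVec p j) 0 = 0 := fun j =>
    (hcol₁ j).apply_eq_zero_of_sum_eq_of_le (hpos.apply_stdVec_nonneg · j) (hle · j)
      (t := (range (j + 1)).map (addRightEmbedding 1)) (by simp [hcolD]) (by simp)
  exact one_ne_zero ((hrow₁ 0).unique (by simp [hrow₁_zero]))
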